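/- For every ε > 0 there exists v₀ > 0 such that the sequence (vₙ)_{n ≥ -1} with v₋₁ = 0 and vₙ(v_{n+1} + v_{n-1} + 1) = ε(n+1) for all n ≥ 0 satisfies vₙ > 0 for all n ≥ 0 and, in addition, b_n^{(2j-1)} ≤ vₙ ≤ b_n^{(2j)} for all integers j ≥ 0 and all n ≥ 0. -/

import Mathlib

open Filter Topology Finset

/-!
`T` is antitone on nonnegative sequences and `b^{(-1)} = 0` is minimal, so the lower bounds
`b^{(2j-1)}` increase in `j`, the upper bounds `b^{(2j)}` decrease, and each lower bound lies below
each upper bound. Their limits `L ≤ U` satisfy `T L = U`, `T U = L` by continuity of `T`, and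
`L ≥ b^{(1)} ≥ ε/(1+2ε)`. For such a 2-cycle the Casoratian `c_n = L_n U_{n+1} - U_n L_{n+1}`
telescopes to `∑_{k ≤ n} (U_k - L_k)`, and the recursion gives
`c_n r_{n+1} ≤ ε(n+1)(r_{n+1} - r_n)` for `r = U/L ≥ 1`; in particular `c_n < ε(n+1)`.
If `U_m > L_m`, then `c_n ≥ U_m - L_m` for `n ≥ m`, so by the divergence of the harmonic series
`r`, and with it `U - L = L(r - 1)`, tends to infinity; then the partial sums `c_n` outgrow
`ε(n+1)`. Hence `U = L` is a fixed point of `T`, i.e. a positive solution.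
-/

/-- The map `T` acting on sequences: `T(u)₀ = ε/(1+u₁)`,
`T(u)ₙ = ε(n+1)/(1 + u_{n-1} + u_{n+1})` for `n ≥ 1`. -/
noncomputable def Tmap (ε : ℝ) (u : ℕ → ℝ) : ℕ → ℝ
  | 0 => ε / (1 + u 1)
  | (n+1) => ε * ((n : ℝ) + 2) / (1 + u n + u (n+2))

/-- Shifted bound sequences: `bnd ε k = b^{(k-1)}`, i.e. `bnd ε 0 = b^{(-1)} = 0`
and `bnd ε (k+1) = T (bnd ε k)`, so that `b^{(k)} = bnd ε (k+1)` for `k ≥ -1`. -/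
noncomputable def bnd (ε : ℝ) : ℕ → ℕ → ℝ
  | 0 => fun _ => 0
  | (k+1) => Tmap ε (bnd ε k)

/-- Shifted rescaled bounds: `rho ε k n = ρ_n^{(k-1)} = b_n^{(k-1)}/(ε(n+1))`. -/
noncomputable def rho (ε : ℝ) (k n : ℕ) : ℝ := bnd ε k n / (ε * ((n : ℝ) + 1))

/-- The differences `Δd ε k n = Δ_n^{(k)} = (-1)^k (ρ_n^{(k)} - ρ_n^{(k-1)})` for `k ≥ 0`. -/
noncomputable def Δd (ε : ℝ) (k n : ℕ) : ℝ := (-1 : ℝ)^k * (rho ε (k+1) n - rho ε k n)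

section Tmap

variable {ε : ℝ}

lemma Tmap_nonneg (hε : 0 ≤ ε) {u : ℕ → ℝ} (hu : ∀ n, 0 ≤ u n) (n : ℕ) :
    0 ≤ Tmap ε u n := by
  cases n with
  | zero => exact div_nonneg hε (by linarith [hu 1])
  | succ n => exact div_nonneg (by positivity) (by linarith [hu n, hu (n+2)])

lemma Tmap_antitone (hε : 0 ≤ ε) {u w : ℕ → ℝ} (hu : ∀ n, 0 ≤ u n)
    (huw : ∀ n, u n ≤ w n) (n : ℕ) : Tmap ε w n ≤ Tmap ε u n := by
  cases n with
  | zero => exact div_le_div_of_nonneg_left hε (by linarith [hu 1]) (by linarith [huw 1])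
  | succ n =>
    exact div_le_div_of_nonneg_left (by positivity) (by linarith [hu n, hu (n+2)])
      (by linarith [huw n, huw (n+2)])

lemma Tmap_zero_mul {u : ℕ → ℝ} (hu : 0 ≤ u 1) : Tmap ε u 0 * (1 + u 1) = ε :=
  div_mul_cancel₀ _ (by linarith : (0 : ℝ) < 1 + u 1).ne'

lemma Tmap_succ_mul {u : ℕ → ℝ} (hu : ∀ n, 0 ≤ u n) (n : ℕ) :
    Tmap ε u (n+1) * (1 + u n + u (n+2)) = ε * ((n : ℝ) + 2) :=
  div_mul_cancel₀ _ (by linarith [hu n, hu (n+2)] : (0 : ℝ) < 1 + u n + u (n+2)).ne'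

lemma tendsto_Tmap {ι : Type*} {l : Filter ι} {u : ι → ℕ → ℝ} {v : ℕ → ℝ}
    (hv : ∀ n, 0 ≤ v n) (hu : ∀ n, Tendsto (fun i => u i n) l (𝓝 (v n))) (n : ℕ) :
    Tendsto (fun i => Tmap ε (u i) n) l (𝓝 (Tmap ε v n)) := by
  cases n with
  | zero =>
    exact tendsto_const_nhds.div (tendsto_const_nhds.add (hu 1))
      (by linarith [hv 1] : (0 : ℝ) < 1 + v 1).ne'
  | succ n =>
    exact tendsto_const_nhds.div ((tendsto_const_nhds.add (hu n)).add (hu (n+2)))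
      (by linarith [hv n, hv (n+2)] : (0 : ℝ) < 1 + v n + v (n+2)).ne'

end Tmap

section Bounds

variable {ε : ℝ}

lemma bnd_nonneg (hε : 0 ≤ ε) : ∀ k n, 0 ≤ bnd ε k n
  | 0, _ => le_rfl
  | k+1, n => Tmap_nonneg hε (bnd_nonneg hε k) n

lemma bnd_succ_le_bnd_succ (hε : 0 ≤ ε) {i k : ℕ} (h : ∀ n, bnd ε i n ≤ bnd ε k n)
    (n : ℕ) :
    bnd ε (k+1) n ≤ bnd ε (i+1) n :=
  Tmap_antitone hε (bnd_nonneg hε i) h n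

lemma bnd_even_le (hε : 0 ≤ ε) (j m n : ℕ) : bnd ε (2*j) n ≤ bnd ε (2*j+m) n := by
  induction j generalizing m n with
  | zero => simpa [bnd] using bnd_nonneg hε m n
  | succ j ih =>
    convert bnd_succ_le_bnd_succ hε (bnd_succ_le_bnd_succ hε (ih m)) n using 2 <;> omega

lemma bnd_le_odd (hε : 0 ≤ ε) (j m n : ℕ) : bnd ε (2*j+1+m) n ≤ bnd ε (2*j+1) n := by
  convert bnd_succ_le_bnd_succ hε (bnd_even_le hε j m) n using 2
  omega

lemma bnd_even_le_odd (hε : 0 ≤ ε) (i j n : ℕ) : bnd ε (2*j) n ≤ bnd ε (2*i+1) n := by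
  rcases le_or_gt j i with h | h
  · obtain ⟨m, rfl⟩ := Nat.exists_eq_add_of_le h
    convert bnd_even_le hε j (2*m+1) n using 2
    ring
  · obtain ⟨m, rfl⟩ := Nat.exists_eq_add_of_lt h
    convert bnd_le_odd hε i (2*m+1) n using 2
    ring

lemma bnd_even_monotone (hε : 0 ≤ ε) (n : ℕ) : Monotone fun j => bnd ε (2*j) n :=
  monotone_nat_of_le_succ fun j => bnd_even_le hε j 2 n

lemma bnd_odd_antitone (hε : 0 ≤ ε) (n : ℕ) : Antitone fun j => bnd ε (2*j+1) n :=
  antitone_nat_of_succ_le fun j => by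
    have h := bnd_le_odd hε j 2 n
    rwa [show 2*j+1+2 = 2*(j+1)+1 by ring] at h

lemma bnd_one (n : ℕ) : bnd ε 1 n = ε * ((n : ℝ) + 1) := by
  cases n with
  | zero => simp [bnd, Tmap]
  | succ n =>
    simp only [bnd, Tmap]
    push_cast
    ring

lemma div_le_bnd_two (hε : 0 ≤ ε) (n : ℕ) : ε / (1 + 2*ε) ≤ bnd ε 2 n := by
  rw [show bnd ε 2 = Tmap ε (bnd ε 1) from rfl]
  cases n with
  | zero =>
    simp only [Tmap, bnd_one]
    norm_num [mul_comm]
  | succ n =>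
    simp only [Tmap, bnd_one]
    rw [div_le_div_iff₀ (by positivity) (by positivity)]
    push_cast
    nlinarith [mul_nonneg hε (Nat.cast_nonneg n : (0:ℝ) ≤ n)]

end Bounds

section Limits

variable {ε : ℝ}

noncomputable def bndLower (ε : ℝ) (n : ℕ) : ℝ := ⨆ j, bnd ε (2*j) n

noncomputable def bndUpper (ε : ℝ) (n : ℕ) : ℝ := ⨅ j, bnd ε (2*j+1) n

lemma bddAbove_bnd_even (hε : 0 ≤ ε) (n : ℕ) : BddAbove (Set.range fun j => bnd ε (2*j) n) :=
  ⟨bnd ε 1 n, by rintro _ ⟨j, rfl⟩; exact bnd_even_le_odd hε 0 j n⟩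

lemma bddBelow_bnd_odd (hε : 0 ≤ ε) (n : ℕ) :
    BddBelow (Set.range fun j => bnd ε (2*j+1) n) :=
  ⟨0, by rintro _ ⟨j, rfl⟩; exact bnd_nonneg hε _ n⟩

lemma bnd_even_le_bndLower (hε : 0 ≤ ε) (j n : ℕ) : bnd ε (2*j) n ≤ bndLower ε n :=
  le_ciSup (bddAbove_bnd_even hε n) j

lemma bndUpper_le_bnd_odd (hε : 0 ≤ ε) (j n : ℕ) : bndUpper ε n ≤ bnd ε (2*j+1) n :=
  ciInf_le (bddBelow_bnd_odd hε n) j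

lemma bndLower_le_bndUpper (hε : 0 ≤ ε) (n : ℕ) : bndLower ε n ≤ bndUpper ε n :=
  le_ciInf fun i => ciSup_le fun j => bnd_even_le_odd hε i j n

lemma bndLower_nonneg (hε : 0 ≤ ε) (n : ℕ) : 0 ≤ bndLower ε n :=
  bnd_even_le_bndLower hε 0 n

lemma bndUpper_nonneg (hε : 0 ≤ ε) (n : ℕ) : 0 ≤ bndUpper ε n :=
  (bndLower_nonneg hε n).trans (bndLower_le_bndUpper hε n)

lemma div_le_bndLower (hε : 0 ≤ ε) (n : ℕ) : ε / (1 + 2*ε) ≤ bndLower ε n :=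
  (div_le_bnd_two hε n).trans (bnd_even_le_bndLower hε 1 n)

lemma tendsto_bnd_even (hε : 0 ≤ ε) (n : ℕ) :
    Tendsto (fun j => bnd ε (2*j) n) atTop (𝓝 (bndLower ε n)) :=
  tendsto_atTop_ciSup (bnd_even_monotone hε n) (bddAbove_bnd_even hε n)

lemma tendsto_bnd_odd (hε : 0 ≤ ε) (n : ℕ) :
    Tendsto (fun j => bnd ε (2*j+1) n) atTop (𝓝 (bndUpper ε n)) :=
  tendsto_atTop_ciInf (bnd_odd_antitone hε n) (bddBelow_bnd_odd hε n)

lemma Tmap_bndLower (hε : 0 ≤ ε) : Tmap ε (bndLower ε) = bndUpper ε :=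
  funext fun n => tendsto_nhds_unique
    (tendsto_Tmap (bndLower_nonneg hε) (tendsto_bnd_even hε) n) (tendsto_bnd_odd hε n)

lemma Tmap_bndUpper (hε : 0 ≤ ε) : Tmap ε (bndUpper ε) = bndLower ε :=
  funext fun n => tendsto_nhds_unique
    (tendsto_Tmap (bndUpper_nonneg hε) (tendsto_bnd_odd hε) n)
    ((tendsto_bnd_even hε n).comp (tendsto_add_atTop_nat 1))

end Limits

lemma tendsto_atTop_of_div_succ_le_sub {r : ℕ → ℝ} {a : ℝ} (ha : 0 < a) (m : ℕ)
    (h : ∀ k ≥ m, a / ((k : ℝ) + 1) ≤ r (k+1) - r k) : Tendsto r atTop atTop := by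
  set H : ℕ → ℝ := fun k => ∑ i ∈ range k, 1 / ((i : ℝ) + 1)
  have hH : Tendsto H atTop atTop := Real.tendsto_sum_range_one_div_nat_succ_atTop
  have hr : ∀ k ≥ m, r m - a * H m + a * H k ≤ r k := by
    intro k hk
    induction k, hk using Nat.le_induction with
    | base => simp
    | succ k hk ih =>
      have hstep : H (k+1) = H k + 1 / ((k : ℝ) + 1) := sum_range_succ _ _
      rw [hstep, mul_add, mul_one_div]
      linarith [h k hk]
  exact tendsto_atTop_mono' atTop (eventually_atTop.2 ⟨m, hr⟩)
    (tendsto_atTop_add_const_left _ _ (hH.const_mul_atTop ha))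

lemma exists_mul_lt_sum_range {w : ℕ → ℝ} (hw0 : ∀ n, 0 ≤ w n)
    (hw : Tendsto w atTop atTop) (C : ℝ) :
    ∃ n : ℕ, C * ((n : ℝ) + 1) < ∑ k ∈ range (n+1), w k := by
  obtain ⟨N, hN⟩ := eventually_atTop.1 (hw.eventually_ge_atTop (2 * |C| + 1))
  refine ⟨2*N+1, ?_⟩
  have htail : ∑ k ∈ Ico N (2*N+2), w k ≤ ∑ k ∈ range (2*N+1+1), w k :=
    sum_le_sum_of_subset_of_nonneg (fun k hk => by simp only [mem_Ico, mem_range] at hk ⊢; omega)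
      fun k _ _ => hw0 k
  have hcard := card_nsmul_le_sum (Ico N (2*N+2)) w (2 * |C| + 1)
    fun k hk => hN k (mem_Ico.1 hk).1
  rw [Nat.card_Ico, show 2*N+2-N = N+2 by omega, nsmul_eq_mul] at hcard
  push_cast at hcard ⊢
  nlinarith [le_abs_self C, abs_nonneg C]

section TwoCycle

variable {ε : ℝ} {L U : ℕ → ℝ}

def casoratian (L U : ℕ → ℝ) (n : ℕ) : ℝ := L n * U (n+1) - U n * L (n+1)

lemma casoratian_eq_sum (hL : ∀ n, 0 ≤ L n) (hU : ∀ n, 0 ≤ U n) (hTL : Tmap ε L = U)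
    (hTU : Tmap ε U = L) (n : ℕ) : casoratian L U n = ∑ k ∈ range (n+1), (U k - L k) := by
  induction n with
  | zero =>
    have hU0 : U 0 * (1 + L 1) = ε := by rw [← hTL]; exact Tmap_zero_mul (hL 1)
    have hL0 : L 0 * (1 + U 1) = ε := by rw [← hTU]; exact Tmap_zero_mul (hU 1)
    simp only [casoratian, zero_add, sum_range_one]
    linear_combination hL0 - hU0
  | succ n ih =>
    have hUn : U (n+1) * (1 + L n + L (n+2)) = ε * ((n : ℝ) + 2) := by
      rw [← hTL]; exact Tmap_succ_mul hL n
    have hLn : L (n+1) * (1 + U n + U (n+2)) = ε * ((n : ℝ) + 2) := by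
      rw [← hTU]; exact Tmap_succ_mul hU n
    rw [sum_range_succ, ← ih]
    simp only [casoratian]
    linear_combination hLn - hUn

lemma mul_succ_le_of_Tmap_eq (hL : ∀ n, 0 ≤ L n) (hU : ∀ n, 0 ≤ U n) (hTU : Tmap ε U = L)
    (n : ℕ) : L n * U (n+1) ≤ ε * ((n : ℝ) + 1) := by
  cases n with
  | zero =>
    have hL0 : L 0 * (1 + U 1) = ε := by rw [← hTU]; exact Tmap_zero_mul (hU 1)
    push_cast
    nlinarith [hL 0]
  | succ n =>
    have hLn : L (n+1) * (1 + U n + U (n+2)) = ε * ((n : ℝ) + 2) := by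
      rw [← hTU]; exact Tmap_succ_mul hU n
    push_cast
    nlinarith [hL (n+1), hU n]

lemma casoratian_mul_ratio_le (hL : ∀ n, 0 < L n) (hU : ∀ n, 0 ≤ U n) (hTU : Tmap ε U = L)
    {n : ℕ} (hc : 0 ≤ casoratian L U n) :
    casoratian L U n * (U (n+1) / L (n+1)) ≤
      ε * ((n : ℝ) + 1) * (U (n+1) / L (n+1) - U n / L n) := by
  have hLL : 0 < L n * L (n+1) := mul_pos (hL n) (hL (n+1))
  have hstep : U (n+1) / L (n+1) - U n / L n = casoratian L U n / (L n * L (n+1)) := by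
    simp only [casoratian]
    field_simp [(hL n).ne', (hL (n+1)).ne']
  rw [hstep]
  calc casoratian L U n * (U (n+1) / L (n+1))
      = L n * U (n+1) * (casoratian L U n / (L n * L (n+1))) := by
        field_simp [(hL n).ne', (hL (n+1)).ne']
    _ ≤ ε * ((n : ℝ) + 1) * (casoratian L U n / (L n * L (n+1))) :=
        mul_le_mul_of_nonneg_right (mul_succ_le_of_Tmap_eq (fun k => (hL k).le) hU hTU n)
          (div_nonneg hc hLL.le)

theorem eq_of_Tmap_eq_of_Tmap_eq {δ : ℝ} (hε : 0 < ε) (hδ : 0 < δ) (hLδ : ∀ n, δ ≤ L n)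
    (hLU : ∀ n, L n ≤ U n) (hTL : Tmap ε L = U) (hTU : Tmap ε U = L) : U = L := by
  have hL : ∀ n, 0 < L n := fun n => hδ.trans_le (hLδ n)
  have hU : ∀ n, 0 ≤ U n := fun n => (hL n).le.trans (hLU n)
  set r : ℕ → ℝ := fun n => U n / L n with hr_def
  have hr : ∀ n, 1 ≤ r n := fun n => (one_le_div (hL n)).2 (hLU n)
  have hsum := casoratian_eq_sum (fun n => (hL n).le) hU hTL hTU
  have hc : ∀ n, 0 ≤ casoratian L U n := fun n => by
    rw [hsum]
    exact sum_nonneg fun k _ => sub_nonneg.2 (hLU k)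
  have hkey := fun n => casoratian_mul_ratio_le hL hU hTU (hc n)
  have hc_lt : ∀ n, casoratian L U n < ε * ((n : ℝ) + 1) := fun n => by
    have hεn : 0 < ε * ((n : ℝ) + 1) := by positivity
    nlinarith [hkey n, hr n, hr (n+1)]
  by_contra hne
  obtain ⟨m, hm⟩ : ∃ m, L m < U m := by
    by_contra! h
    exact hne (funext fun n => le_antisymm (h n) (hLU n))
  have hr_top : Tendsto r atTop atTop := by
    refine tendsto_atTop_of_div_succ_le_sub (div_pos (sub_pos.2 hm) hε) m fun k hk => ?_
    have hmk : U m - L m ≤ casoratian L U k := by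
      rw [hsum]
      exact single_le_sum (fun i _ => sub_nonneg.2 (hLU i)) (mem_range.2 (by omega))
    rw [div_div, div_le_iff₀ (by positivity)]
    nlinarith [hkey k, hr k, hr (k+1), hc k]
  have hw_top : Tendsto (fun n => U n - L n) atTop atTop := by
    refine tendsto_atTop_mono (fun n => ?_)
      ((tendsto_atTop_add_const_right _ (-1) hr_top).const_mul_atTop hδ)
    have hUr : U n = L n * r n := by simp only [hr_def]; field_simp [(hL n).ne']
    rw [hUr]
    nlinarith [hLδ n, hr n]
  obtain ⟨n, hn⟩ := exists_mul_lt_sum_range (fun n => sub_nonneg.2 (hLU n)) hw_top ε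
  linarith [hc_lt n, hsum n]

end TwoCycle

lemma bndLower_pos {ε : ℝ} (hε : 0 < ε) (n : ℕ) : 0 < bndLower ε n :=
  (by positivity : 0 < ε / (1 + 2*ε)).trans_le (div_le_bndLower hε.le n)

theorem bndUpper_eq_bndLower {ε : ℝ} (hε : 0 < ε) : bndUpper ε = bndLower ε :=
  eq_of_Tmap_eq_of_Tmap_eq hε (by positivity) (div_le_bndLower hε.le)
    (bndLower_le_bndUpper hε.le) (Tmap_bndLower hε.le) (Tmap_bndUpper hε.le)

theorem Tmap_bndLower_eq_self {ε : ℝ} (hε : 0 < ε) : Tmap ε (bndLower ε) = bndLower ε := by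
  rw [Tmap_bndLower hε.le, bndUpper_eq_bndLower hε]

/-- `v m` stands for `v_{m-1}`. -/
theorem statement3 (ε : ℝ) (hε : 0 < ε) :
    ∃ v : ℕ → ℝ, v 0 = 0 ∧ 0 < v 1 ∧
      (∀ n : ℕ, v (n+1) * (v (n+2) + v n + 1) = ε * ((n : ℝ) + 1)) ∧
      (∀ n : ℕ, 0 < v (n+1)) ∧
      (∀ j n : ℕ, bnd ε (2*j) n ≤ v (n+1) ∧ v (n+1) ≤ bnd ε (2*j+1) n) := by
  have hL := bndLower_pos hε
  have hfix := Tmap_bndLower_eq_self hε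
  refine ⟨fun | 0 => 0 | n+1 => bndLower ε n, rfl, hL 0, fun n => ?_, hL,
    fun j n => ⟨bnd_even_le_bndLower hε.le j n, ?_⟩⟩
  · cases n with
    | zero =>
      have h := Tmap_zero_mul (ε := ε) (hL 1).le
      rw [hfix] at h
      push_cast
      linarith
    | succ n =>
      have h := Tmap_succ_mul (ε := ε) (fun k => (hL k).le) n
      rw [hfix] at h
      push_cast
      linarith
  · rw [← bndUpper_eq_bndLower hε]
    exact bndUpper_le_bnd_odd hε.le j n
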